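/- Let λ, μ, ν be partitions and suppose (r_k^i, r_k^{i+1/2})_{1 ≤ k ≤ ℓ(μ), 1 ≤ i ≤ ℓ(ν)} is a tuple of integers satisfying conditions (A)–(F) for (λ,μ,ν). Then there exists T ∈ EdgeTab(λ,μ,ν) with r_k^i(T) = r_k^i and r_k^{i+1/2}(T) = r_k^{i+1/2} for all 1 ≤ k ≤ ℓ(μ) and 1 ≤ i ≤ ℓ(ν). -/

import Mathlib

/-!
Common definitions: partitions, edge-labeled tableaux (Thomas–Yong), reading
words, the polytope conditions (A)–(F), plus diagrams and (factorial) Schur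
polynomials, following Adve–Robichaux–Yong,
"Vanishing of Littlewood-Richardson polynomials is in P".
-/

/-- A partition: a weakly decreasing, eventually-zero sequence of natural numbers.
Internally `toFun` is 0-indexed: `toFun (i-1)` is the `i`-th part `λ_i`. -/
structure NPartition where
  toFun : ℕ → ℕ
  antitone' : ∀ ⦃i j : ℕ⦄, i ≤ j → toFun j ≤ toFun i
  eventually_zero' : ∃ N, ∀ i, N ≤ i → toFun i = 0

namespace NPartition

/-- The `i`-th part `λ_i` (1-indexed: `part 1` is the first part). -/
def part (p : NPartition) (i : ℕ) : ℕ := p.toFun (i - 1)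

/-- `ℓ(λ)`: the number of nonzero parts. -/
noncomputable def len (p : NPartition) : ℕ := Set.ncard {i : ℕ | p.toFun i ≠ 0}

/-- `|λ| = Σ_i λ_i`. -/
noncomputable def size (p : NPartition) : ℕ := ∑ᶠ i, p.toFun i

/-- The dilated partition `Nλ = (Nλ_1, Nλ_2, …)`. -/
def smul (N : ℕ) (p : NPartition) : NPartition where
  toFun i := N * p.toFun i
  antitone' _ _ h := Nat.mul_le_mul le_rfl (p.antitone' h)
  eventually_zero' := by
    obtain ⟨M, hM⟩ := p.eventually_zero'
    exact ⟨M, fun i hi => by show N * p.toFun i = 0; rw [hM i hi, Nat.mul_zero]⟩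

/-- `λ ⊆ ν`, i.e. `λ_i ≤ ν_i` for all `i`. -/
def Subset (lam nu : NPartition) : Prop := ∀ i, lam.part i ≤ nu.part i

end NPartition

/-- `(i,j)` (1-indexed, matrix convention) is a box of the skew shape `ν/λ`,
i.e. `λ_i < j ≤ ν_i`. -/
def IsBox (lam nu : NPartition) (i j : ℕ) : Prop :=
  1 ≤ i ∧ lam.part i < j ∧ j ≤ nu.part i

instance (lam nu : NPartition) (i j : ℕ) : Decidable (IsBox lam nu i j) :=
  inferInstanceAs (Decidable (_ ∧ _ ∧ _))

/-- `(i+1/2, j)` is a horizontal edge position of the skew shape `ν/λ`: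
`1 ≤ j ≤ ν_i` and `j > λ_{i+1}`. -/
def IsEdge (lam nu : NPartition) (i j : ℕ) : Prop :=
  1 ≤ i ∧ 1 ≤ j ∧ j ≤ nu.part i ∧ lam.part (i + 1) < j

/-- An edge-labeled tableau of shape `ν/λ` and content `μ` (Thomas–Yong).
`box i j` is the label of box `(i,j)` (`0` outside the shape), and
`edge i j` is the finite set of labels on the edge `(i+1/2, j)`
(empty outside the shape). All labels are positive integers. -/
structure EdgeTableau (lam mu nu : NPartition) where
  subset : NPartition.Subset lam nu
  box : ℕ → ℕ → ℕ
  edge : ℕ → ℕ → Finset ℕ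
  box_pos : ∀ i j, IsBox lam nu i j → 1 ≤ box i j
  box_eq_zero : ∀ i j, ¬ IsBox lam nu i j → box i j = 0
  edge_pos : ∀ i j, ∀ e ∈ edge i j, 1 ≤ e
  edge_eq_empty : ∀ i j, ¬ IsEdge lam nu i j → edge i j = ∅
  row_weak : ∀ i j, IsBox lam nu i j → IsBox lam nu i (j+1) → box i j ≤ box i (j+1)
  col_strict : ∀ i j, IsBox lam nu i j → IsBox lam nu (i+1) j → box i j < box (i+1) j
  edge_gt_box : ∀ i j, IsBox lam nu i j → ∀ e ∈ edge i j, box i j < e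
  edge_lt_box : ∀ i j, IsBox lam nu (i+1) j → ∀ e ∈ edge i j, e < box (i+1) j
  not_too_high : ∀ i j, ∀ e ∈ edge i j, e ≤ i
  content : ∀ k, 1 ≤ k →
    Set.ncard {q : ℕ × ℕ | box q.1 q.2 = k} + Set.ncard {q : ℕ × ℕ | k ∈ edge q.1 q.2}
      = mu.part k

namespace EdgeTableau

variable {lam mu nu : NPartition}

/-- The (one-letter or empty) word contributed by the box `(i,j)`. -/
def boxWord (T : EdgeTableau lam mu nu) (i j : ℕ) : List ℕ :=
  if IsBox lam nu i j then [T.box i j] else []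

/-- The word contributed by the edge `(i+1/2, j)`, read in increasing order. -/
def edgeWord (T : EdgeTableau lam mu nu) (i j : ℕ) : List ℕ :=
  (T.edge i j).sort (· ≤ ·)

/-- The column reading word `w_c(T)`: columns right to left, each column top to
bottom, alternating the box label of row `i` with the edge set of row `i+1/2`. -/
noncomputable def wc (T : EdgeTableau lam mu nu) : List ℕ :=
  ((List.range (nu.part 1)).reverse).flatMap fun j0 =>
    (List.range nu.len).flatMap fun i0 =>
      T.boxWord (i0+1) (j0+1) ++ T.edgeWord (i0+1) (j0+1)

/-- The row reading word `w_r(T)`: for `i = 1, 2, …`, the boxes of row `i`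
right to left, then the edge sets of row `i+1/2` right to left. -/
noncomputable def wr (T : EdgeTableau lam mu nu) : List ℕ :=
  (List.range nu.len).flatMap fun i0 =>
    (((List.range (nu.part 1)).reverse).flatMap fun j0 => T.boxWord (i0+1) (j0+1)) ++
    (((List.range (nu.part 1)).reverse).flatMap fun j0 => T.edgeWord (i0+1) (j0+1))

end EdgeTableau

/-- A word is lattice if, for every `k ≥ 1`, every prefix contains at least as
many letters `k` as letters `k+1`. -/
def IsLatticeWord (w : List ℕ) : Prop :=
  ∀ k, 1 ≤ k → ∀ t, (w.take t).count (k+1) ≤ (w.take t).count k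

/-- `EdgeTab(λ,μ,ν)`: edge-labeled tableaux of shape `ν/λ` and content `μ`
whose column reading word is lattice. -/
def EdgeTab (lam mu nu : NPartition) : Set (EdgeTableau lam mu nu) :=
  {T | IsLatticeWord T.wc}

/-! ### Positions and reading-order prefixes -/

/-- A (horizontal) position of a tableau: a box `(i,j)` or an edge `(i+1/2, j)`. -/
inductive HPos
  | box (i j : ℕ)
  | edge (i j : ℕ)

namespace HPos

/-- Twice the (half-integer) row index: `2i` for a box in row `i`,
`2i+1` for an edge in row `i+1/2`. -/
def rowIdx : HPos → ℕ
  | .box i _ => 2 * i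
  | .edge i _ => 2 * i + 1

/-- The column of a position. -/
def col : HPos → ℕ
  | .box _ j => j
  | .edge _ j => j

/-- `p` is weakly northeast of `q`: weakly above and weakly to the right. -/
def NorthEastOf (p q : HPos) : Prop := p.rowIdx ≤ q.rowIdx ∧ q.col ≤ p.col

/-- `p` is read no later than `q` in the column reading order (columns right to
left, each column top to bottom); equivalently, every label at `p` is read by
the prefix `w_c|_q` of the column reading word ending after position `q`. -/
def colLE (p q : HPos) : Prop := q.col < p.col ∨ (p.col = q.col ∧ p.rowIdx ≤ q.rowIdx)

/-- `p` is read no later than `q` in the row reading order (rows top to bottom,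
each row right to left); equivalently, every label at `p` is read by the
prefix `w_r|_q` of the row reading word ending after position `q`. -/
def rowLE (p q : HPos) : Prop := p.rowIdx < q.rowIdx ∨ (p.rowIdx = q.rowIdx ∧ q.col ≤ p.col)

end HPos

/-- `p` is a valid (box or edge) position of the skew shape `ν/λ`. -/
def IsPos (lam nu : NPartition) : HPos → Prop
  | .box i j => IsBox lam nu i j
  | .edge i j => IsEdge lam nu i j

/-- The tableau `T` carries the label `ℓ` at the position `p`. -/
def EdgeTableau.HasLabel {lam mu nu : NPartition} (T : EdgeTableau lam mu nu) :
    HPos → ℕ → Prop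
  | .box i j, ℓ => IsBox lam nu i j ∧ T.box i j = ℓ
  | .edge i j, ℓ => ℓ ∈ T.edge i j

/-! ### The statistics `r_k^i(T)`, `r_k^{i+1/2}(T)` and conditions (A)–(F) -/

/-- `r_k^i(T)`: the number of box labels `k` in row `i` of `T`. -/
noncomputable def EdgeTableau.rbox {lam mu nu : NPartition} (T : EdgeTableau lam mu nu)
    (k i : ℕ) : ℕ :=
  Set.ncard {j : ℕ | IsBox lam nu i j ∧ T.box i j = k}

/-- `r_k^{i+1/2}(T)`: the number of edge labels `k` on the edges `(i+1/2, j)` of `T`. -/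
noncomputable def EdgeTableau.redge {lam mu nu : NPartition} (T : EdgeTableau lam mu nu)
    (k i : ℕ) : ℕ :=
  Set.ncard {j : ℕ | k ∈ T.edge i j}

open Finset in
/-- Conditions (A)–(F) of Adve–Robichaux–Yong for the triple `(λ,μ,ν)` on the real
tuple `(r_k^i, r_k^{i+1/2})_{1 ≤ k ≤ ℓ(μ), 1 ≤ i ≤ ℓ(ν)}`, encoded as a pair of
functions `rb re : ℕ → ℕ → ℝ` (`rb k i = r_k^i`, `re k i = r_k^{i+1/2}`) that
vanish outside the index range (which also encodes the paper's conventions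
`r_{ℓ(μ)+1}^i = r_{ℓ(μ)+1}^{i+1/2} = 0` and `r_k^{ℓ(ν)+1} = 0`).
Membership in the polytope `P(λ,μ,ν)` is exactly this predicate. -/
def SatisfiesAF (lam mu nu : NPartition) (rb re : ℕ → ℕ → ℝ) : Prop :=
  -- the tuple is indexed by `1 ≤ k ≤ ℓ(μ)`, `1 ≤ i ≤ ℓ(ν)`; it vanishes elsewhere
  (∀ k i, ¬(1 ≤ k ∧ k ≤ mu.len ∧ 1 ≤ i ∧ i ≤ nu.len) → rb k i = 0 ∧ re k i = 0) ∧
  -- (A) nonnegativity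
  (∀ k i, 0 ≤ rb k i ∧ 0 ≤ re k i) ∧
  -- (B) shape constraints
  (∀ i, 1 ≤ i → (lam.part i : ℝ) + ∑ k ∈ Icc 1 mu.len, rb k i = (nu.part i : ℝ)) ∧
  -- (C) content constraints
  (∀ k, 1 ≤ k → ∑ i ∈ Icc 1 nu.len, (rb k i + re k i) = (mu.part k : ℝ)) ∧
  -- (D) gap constraints
  (∀ k i, 1 ≤ k → k ≤ mu.len → 1 ≤ i → i ≤ nu.len →
    re k i ≤ ((lam.part i : ℝ) + ∑ k' ∈ Ico 1 k, rb k' i)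
      - ((lam.part (i+1) : ℝ) + ∑ k' ∈ Icc 1 k, rb k' (i+1))) ∧
  -- (E) no label is too high
  (∀ k i, i < k → rb k i = 0 ∧ re k i = 0) ∧
  -- (F) reverse lattice word constraints
  (∀ k i, 1 ≤ k → k ≤ mu.len → 1 ≤ i → i ≤ nu.len →
    rb (k+1) i + ∑ i' ∈ Ico 1 i, (rb (k+1) i' + re (k+1) i')
      ≤ ∑ i' ∈ Ico 1 i, (rb k i' + re k i'))

/-! ### Plus diagrams and (factorial) Schur polynomials -/

/-- The initial diagram of `λ` in the `n`-row grid: a `+` in each position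
`(i,j)` with `1 ≤ i ≤ n`, `1 ≤ j ≤ λ_i`. -/
def initialDiagram (n : ℕ) (lam : NPartition) : Finset (ℕ × ℕ) :=
  (Finset.Icc 1 n ×ˢ Finset.Icc 1 (lam.part 1)).filter fun q => q.2 ≤ lam.part q.1

/-- A local move in the `n × m` grid: a `+` at `(i,j)` moves to `(i+1,j+1)`,
provided `(i+1,j+1)` lies in the grid and `(i,j+1)`, `(i+1,j)`, `(i+1,j+1)`
carry no `+`. -/
def IsLocalMove (n m : ℕ) (P Q : Finset (ℕ × ℕ)) : Prop :=
  ∃ i j, (i, j) ∈ P ∧ i + 1 ≤ n ∧ j + 1 ≤ m ∧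
    (i, j+1) ∉ P ∧ (i+1, j) ∉ P ∧ (i+1, j+1) ∉ P ∧
    Q = insert (i+1, j+1) (P.erase (i, j))

/-- `Plus(λ)`: all configurations obtainable from the initial diagram of `λ`
in the `n × m` grid by finite sequences of local moves. -/
def PlusSet (n m : ℕ) (lam : NPartition) : Set (Finset (ℕ × ℕ)) :=
  {P | Relation.ReflTransGen (IsLocalMove n m) (initialDiagram n lam) P}

open MvPolynomial in
/-- `wt_{x,y}(P) = ∏_{(i,j) ∈ P} (x_i - y_j)`, in `ℤ[x_1, x_2, …, y_1, y_2, …]`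
(the variable `Sum.inl i` is `x_i`, and `Sum.inr j` is `y_j`). -/
noncomputable def wtxy (P : Finset (ℕ × ℕ)) : MvPolynomial (ℕ ⊕ ℕ) ℤ :=
  ∏ q ∈ P, (X (Sum.inl q.1) - X (Sum.inr q.2))

open MvPolynomial in
/-- `wt_x(P) = ∏_i x_i^{a_i(P)}`, where `a_i(P)` is the number of `+`'s in row `i`. -/
noncomputable def wtx (P : Finset (ℕ × ℕ)) : MvPolynomial (ℕ ⊕ ℕ) ℤ :=
  ∏ q ∈ P, X (Sum.inl q.1)

/-- The factorial Schur polynomial `s_λ(X;Y) = Σ_{P ∈ Plus(λ)} wt_{x,y}(P)`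
(computed in the `n × m` grid). -/
noncomputable def factorialSchur (n m : ℕ) (lam : NPartition) : MvPolynomial (ℕ ⊕ ℕ) ℤ :=
  ∑ᶠ P ∈ PlusSet n m lam, wtxy P

/-- The Schur polynomial `s_λ(X) = Σ_{P ∈ Plus(λ)} wt_x(P)`
(computed in the `n × m` grid). -/
noncomputable def schurPoly (n m : ℕ) (lam : NPartition) : MvPolynomial (ℕ ⊕ ℕ) ℤ :=
  ∑ᶠ P ∈ PlusSet n m lam, wtx P

open MvPolynomial in
/-- The substitution `y_j = 0` for all `j` (keeping the `x`-variables). -/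
noncomputable def setYtoZero : MvPolynomial (ℕ ⊕ ℕ) ℤ →+* MvPolynomial (ℕ ⊕ ℕ) ℤ :=
  (aeval (Sum.elim (fun i => (X (Sum.inl i) : MvPolynomial (ℕ ⊕ ℕ) ℤ)) fun _ => 0)).toRingHom

open MvPolynomial in
/-- Interpret a polynomial in `ℤ[y_1, y_2, …]` inside `ℤ[x_1, …, y_1, …]`. -/
noncomputable def yPoly (p : MvPolynomial ℕ ℤ) : MvPolynomial (ℕ ⊕ ℕ) ℤ :=
  rename Sum.inr p

namespace ARY

open Finset

/-! ### NPartition lemmas -/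

lemma part_anti (p : NPartition) {i j : ℕ} (h : i ≤ j) : p.part j ≤ p.part i :=
  p.antitone' (Nat.sub_le_sub_right h 1)

lemma finite_support (p : NPartition) : {i : ℕ | p.toFun i ≠ 0}.Finite := by
  obtain ⟨N, hN⟩ := p.eventually_zero'
  refine Set.Finite.subset (Set.finite_Iio N) ?_
  intro i hi
  by_contra hlt
  exact hi (hN i (not_lt.mp hlt))

lemma lt_len_of_toFun_ne (p : NPartition) {m : ℕ} (h : p.toFun m ≠ 0) : m < p.len := by
  have hsub : (↑(Finset.range (m+1)) : Set ℕ) ⊆ {i : ℕ | p.toFun i ≠ 0} := by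
    intro x hx
    simp only [Finset.coe_range, Set.mem_Iio] at hx
    intro h0
    exact h (Nat.le_antisymm (h0 ▸ p.antitone' (Nat.le_of_lt_succ hx)) (Nat.zero_le _))
  have := Set.ncard_le_ncard hsub (finite_support p)
  rw [Set.ncard_coe_finset, Finset.card_range] at this
  exact Nat.lt_of_succ_le this

lemma toFun_eq_zero_of_len_le (p : NPartition) {m : ℕ} (h : p.len ≤ m) : p.toFun m = 0 := by
  by_contra hne
  exact absurd (lt_len_of_toFun_ne p hne) (not_lt.mpr h)

lemma part_eq_zero_of_len_lt (p : NPartition) {i : ℕ} (h : p.len < i) : p.part i = 0 :=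
  toFun_eq_zero_of_len_le p (by omega)

lemma le_len_of_part_ne_zero (p : NPartition) {i : ℕ} (h : p.part i ≠ 0) : i ≤ p.len := by
  have := lt_len_of_toFun_ne p h
  omega

lemma part_anti_succ (p : NPartition) (k : ℕ) : p.part (k+1) ≤ p.part k :=
  part_anti p (Nat.le_succ k)

/-! ### Natural-number form of the conditions (A)--(F) -/

structure NatFacts (lam mu nu : NPartition) (rbN reN : ℕ → ℕ → ℕ) : Prop where
  supp : ∀ k i, ¬(1 ≤ k ∧ k ≤ mu.len ∧ 1 ≤ i ∧ i ≤ nu.len) → rbN k i = 0 ∧ reN k i = 0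
  shape : ∀ i, 1 ≤ i → lam.part i + ∑ k ∈ Finset.Icc 1 mu.len, rbN k i = nu.part i
  content : ∀ k, 1 ≤ k → ∑ i ∈ Finset.Icc 1 nu.len, (rbN k i + reN k i) = mu.part k
  gap : ∀ k i, 1 ≤ k → k ≤ mu.len → 1 ≤ i → i ≤ nu.len →
    (lam.part (i+1) + ∑ k' ∈ Finset.Icc 1 k, rbN k' (i+1)) + reN k i
      ≤ lam.part i + ∑ k' ∈ Finset.Icc 1 (k-1), rbN k' i
  high : ∀ k i, i < k → rbN k i = 0 ∧ reN k i = 0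
  latt : ∀ k i, 1 ≤ k → k ≤ mu.len → 1 ≤ i → i ≤ nu.len →
    rbN (k+1) i + ∑ i' ∈ Finset.Ico 1 i, (rbN (k+1) i' + reN (k+1) i')
      ≤ ∑ i' ∈ Finset.Ico 1 i, (rbN k i' + reN k i')

/-! ### The profile function `B` -/

/-- `B lam rbN m i = λ_i + Σ_{k ≤ m} rb_k^i`: the column index where the
(box) labels `≤ m` of row `i` end. -/
def B (lam : NPartition) (rbN : ℕ → ℕ → ℕ) (m i : ℕ) : ℕ :=
  lam.part i + ∑ k ∈ Finset.Icc 1 m, rbN k i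

section BFacts

variable {lam mu nu : NPartition} {rbN reN : ℕ → ℕ → ℕ}

lemma B_zero_eq (lam : NPartition) (rbN : ℕ → ℕ → ℕ) (i : ℕ) :
    B lam rbN 0 i = lam.part i := by
  simp [B]

lemma B_mono (lam : NPartition) (rbN : ℕ → ℕ → ℕ) {m m' : ℕ} (h : m ≤ m') (i : ℕ) :
    B lam rbN m i ≤ B lam rbN m' i := by
  unfold B
  exact Nat.add_le_add_left (Finset.sum_le_sum_of_subset (Finset.Icc_subset_Icc_right h)) _

lemma B_succ (lam : NPartition) (rbN : ℕ → ℕ → ℕ) (m i : ℕ) :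
    B lam rbN (m+1) i = B lam rbN m i + rbN (m+1) i := by
  unfold B
  rw [Finset.sum_Icc_succ_top (by omega)]
  ring

lemma lam_le_B (lam : NPartition) (rbN : ℕ → ℕ → ℕ) (m i : ℕ) :
    lam.part i ≤ B lam rbN m i := Nat.le_add_right _ _

lemma B_pred_add (lam : NPartition) (rbN : ℕ → ℕ → ℕ) {m : ℕ} (hm : 1 ≤ m) (i : ℕ) :
    B lam rbN m i = B lam rbN (m-1) i + rbN m i := by
  obtain ⟨n, rfl⟩ : ∃ n, m = n + 1 := ⟨m - 1, by omega⟩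
  simpa using B_succ lam rbN n i

lemma NatFacts.B_stab (nf : NatFacts lam mu nu rbN reN) {m : ℕ} (h : mu.len ≤ m) (i : ℕ) :
    B lam rbN m i = B lam rbN mu.len i := by
  unfold B
  congr 1
  refine (Finset.sum_subset (Finset.Icc_subset_Icc_right h) ?_).symm
  intro k hk hnk
  simp only [Finset.mem_Icc] at hk hnk
  exact (nf.supp k i (by omega)).1

lemma NatFacts.B_len_eq (nf : NatFacts lam mu nu rbN reN) {i : ℕ} (hi : 1 ≤ i) :
    B lam rbN mu.len i = nu.part i := nf.shape i hi

lemma NatFacts.B_le_nu (nf : NatFacts lam mu nu rbN reN) (m : ℕ) {i : ℕ} (hi : 1 ≤ i) :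
    B lam rbN m i ≤ nu.part i := by
  rcases le_total m mu.len with h | h
  · exact (B_mono lam rbN h i).trans (nf.B_len_eq hi).le
  · rw [nf.B_stab h, nf.B_len_eq hi]

lemma NatFacts.subset (nf : NatFacts lam mu nu rbN reN) : NPartition.Subset lam nu := by
  intro i
  rcases Nat.eq_zero_or_pos i with rfl | hi
  · show lam.part 0 ≤ nu.part 0
    have : lam.part 1 ≤ nu.part 1 := le_trans (lam_le_B lam rbN 0 1) (nf.B_le_nu 0 le_rfl)
    exact this
  · exact le_trans (lam_le_B lam rbN 0 i) (nf.B_le_nu 0 hi)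

lemma NatFacts.B_eq_zero (nf : NatFacts lam mu nu rbN reN) {m i : ℕ} (h : nu.len < i) :
    B lam rbN m i = 0 := by
  have hnu : nu.part i = 0 := part_eq_zero_of_len_lt nu h
  have hlam : lam.part i = 0 := Nat.le_antisymm (hnu ▸ nf.subset i) (Nat.zero_le _)
  unfold B
  rw [hlam]
  simp only [Nat.zero_add]
  refine Finset.sum_eq_zero fun k hk => ?_
  simp only [Finset.mem_Icc] at hk
  exact (nf.supp k i (by omega)).1

/-- The diagonal inequality: `B m (i+1) + re_m^i ≤ B (m-1) i` for `m ≥ 1`. -/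
lemma NatFacts.diag (nf : NatFacts lam mu nu rbN reN) {m i : ℕ} (hm : 1 ≤ m) (hi : 1 ≤ i) :
    B lam rbN m (i+1) + reN m i ≤ B lam rbN (m-1) i := by
  rcases le_or_gt i nu.len with hiL | hiL
  · rcases le_or_gt m mu.len with hmL | hmL
    · exact nf.gap m i hm hmL hi hiL
    · have hre : reN m i = 0 := (nf.supp m i (by omega)).1.symm ▸ (nf.supp m i (by omega)).2
      rw [hre]
      rw [nf.B_stab (by omega : mu.len ≤ m) (i+1), nf.B_stab (by omega : mu.len ≤ m - 1) i]
      rw [nf.B_len_eq (by omega : 1 ≤ i + 1), nf.B_len_eq hi]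
      simpa using part_anti_succ nu i
  · have hre : reN m i = 0 := (nf.supp m i (by omega)).2
    rw [hre, nf.B_eq_zero (by omega : nu.len < i + 1)]
    simp

lemma NatFacts.B_anti_succ (nf : NatFacts lam mu nu rbN reN) (m : ℕ) {i : ℕ} (hi : 1 ≤ i) :
    B lam rbN m (i+1) ≤ B lam rbN m i := by
  rcases Nat.eq_zero_or_pos m with rfl | hm
  · rw [B_zero_eq, B_zero_eq]; exact part_anti_succ lam i
  · calc B lam rbN m (i+1) ≤ B lam rbN m (i+1) + reN m i := Nat.le_add_right _ _
      _ ≤ B lam rbN (m-1) i := nf.diag hm hi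
      _ ≤ B lam rbN m i := B_mono lam rbN (by omega) i

lemma NatFacts.B_anti (nf : NatFacts lam mu nu rbN reN) (m : ℕ) {i i' : ℕ} (hi : 1 ≤ i)
    (h : i ≤ i') : B lam rbN m i' ≤ B lam rbN m i := by
  induction i', h using Nat.le_induction with
  | base => exact le_refl _
  | succ n hn ih => exact le_trans (nf.B_anti_succ m (by omega)) ih

end BFacts

end ARY
namespace ARY

open Finset

section Construction

variable {lam mu nu : NPartition} {rbN reN : ℕ → ℕ → ℕ}

/-- The box filling: box `(i,j)` receives the least `k` with `j ≤ B k i`. -/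
noncomputable def boxF (lam nu : NPartition) (rbN : ℕ → ℕ → ℕ) (i j : ℕ) : ℕ :=
  if IsBox lam nu i j then sInf {k | j ≤ B lam rbN k i} else 0

/-- The edge filling: the edge `(i+1/2, j)` receives the labels `k` with
`B k (i+1) < j ≤ B k (i+1) + re_k^i`. -/
noncomputable def edgeF (lam mu : NPartition) (rbN reN : ℕ → ℕ → ℕ) (i j : ℕ) : Finset ℕ :=
  (Finset.Icc 1 (min mu.len i)).filter
    fun k => B lam rbN k (i+1) < j ∧ j ≤ B lam rbN k (i+1) + reN k i

lemma boxF_eq_zero {i j : ℕ} (h : ¬ IsBox lam nu i j) : boxF lam nu rbN i j = 0 :=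
  if_neg h

lemma isBox_of_boxF_ne {i j : ℕ} (h : boxF lam nu rbN i j ≠ 0) : IsBox lam nu i j := by
  by_contra hb
  exact h (boxF_eq_zero hb)

lemma NatFacts.sInf_set_nonempty (nf : NatFacts lam mu nu rbN reN) {i j : ℕ}
    (hb : IsBox lam nu i j) : {k | j ≤ B lam rbN k i}.Nonempty :=
  ⟨mu.len, by rw [Set.mem_setOf_eq, nf.B_len_eq hb.1]; exact hb.2.2⟩

lemma NatFacts.le_B_boxF (nf : NatFacts lam mu nu rbN reN) {i j : ℕ} (hb : IsBox lam nu i j) :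
    j ≤ B lam rbN (boxF lam nu rbN i j) i := by
  rw [boxF, if_pos hb]
  exact Nat.sInf_mem (nf.sInf_set_nonempty hb)

lemma boxF_le_of {i j m : ℕ} (hb : IsBox lam nu i j) (h : j ≤ B lam rbN m i) :
    boxF lam nu rbN i j ≤ m := by
  rw [boxF, if_pos hb]
  exact Nat.sInf_le h

lemma NatFacts.lt_boxF_of (nf : NatFacts lam mu nu rbN reN) {i j m : ℕ} (hb : IsBox lam nu i j)
    (h : B lam rbN m i < j) : m < boxF lam nu rbN i j := by
  by_contra hle
  exact absurd (le_trans (nf.le_B_boxF hb) (B_mono lam rbN (not_lt.mp hle) i)) (not_le.mpr h)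

lemma NatFacts.boxF_pos (nf : NatFacts lam mu nu rbN reN) {i j : ℕ} (hb : IsBox lam nu i j) :
    1 ≤ boxF lam nu rbN i j := by
  have := nf.lt_boxF_of hb (by rw [B_zero_eq]; exact hb.2.1)
  omega

/-- Characterization of the box filling as intervals. -/
lemma NatFacts.boxF_eq_iff (nf : NatFacts lam mu nu rbN reN) {i j k : ℕ} (hk : 1 ≤ k) :
    (IsBox lam nu i j ∧ boxF lam nu rbN i j = k) ↔
      (B lam rbN (k-1) i < j ∧ j ≤ B lam rbN k i) := by
  constructor
  · rintro ⟨hb, rfl⟩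
    refine ⟨?_, nf.le_B_boxF hb⟩
    by_contra hle
    have h2 := boxF_le_of (rbN := rbN) hb (not_lt.mp hle)
    omega
  · rintro ⟨h1, h2⟩
    have hi : 1 ≤ i := by
      by_contra hi
      have hi0 : i = 0 := by omega
      subst hi0
      have : rbN k 0 = 0 := (nf.supp k 0 (by omega)).1
      have hBk := B_pred_add lam rbN hk 0
      omega
    have hb : IsBox lam nu i j := by
      refine ⟨hi, ?_, le_trans h2 (nf.B_le_nu k hi)⟩
      calc lam.part i ≤ B lam rbN (k-1) i := lam_le_B lam rbN _ i
        _ < j := h1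
    refine ⟨hb, le_antisymm (boxF_le_of hb h2) ?_⟩
    by_contra hlt
    have hmem := nf.le_B_boxF hb
    have : B lam rbN (boxF lam nu rbN i j) i ≤ B lam rbN (k-1) i :=
      B_mono lam rbN (by omega) i
    omega

lemma edgeF_mem {i j k : ℕ} :
    k ∈ edgeF lam mu rbN reN i j ↔
      (1 ≤ k ∧ k ≤ mu.len ∧ k ≤ i ∧ B lam rbN k (i+1) < j ∧
        j ≤ B lam rbN k (i+1) + reN k i) := by
  simp only [edgeF, Finset.mem_filter, Finset.mem_Icc, le_min_iff]
  tauto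

/-- Unconditional interval characterization of edge membership, for `k ≥ 1`. -/
lemma NatFacts.edgeF_mem_iff (nf : NatFacts lam mu nu rbN reN) {i j k : ℕ} (hk : 1 ≤ k) :
    k ∈ edgeF lam mu rbN reN i j ↔
      (B lam rbN k (i+1) < j ∧ j ≤ B lam rbN k (i+1) + reN k i) := by
  rw [edgeF_mem]
  constructor
  · tauto
  · rintro ⟨h1, h2⟩
    have hre : reN k i ≠ 0 := by omega
    have hrange : 1 ≤ k ∧ k ≤ mu.len ∧ 1 ≤ i ∧ i ≤ nu.len := by
      by_contra hc
      exact hre (nf.supp k i hc).2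
    have hki : k ≤ i := by
      by_contra hik
      exact hre (nf.high k i (by omega)).2
    exact ⟨hk, hrange.2.1, hki, h1, h2⟩

/-- Ranges attached to an edge label. -/
lemma NatFacts.edgeF_ranges (nf : NatFacts lam mu nu rbN reN) {i j k : ℕ}
    (h : k ∈ edgeF lam mu rbN reN i j) :
    1 ≤ k ∧ k ≤ mu.len ∧ 1 ≤ i ∧ i ≤ nu.len ∧ k ≤ i := by
  rw [edgeF_mem] at h
  obtain ⟨hk, hkmu, hki, h1, h2⟩ := h
  have hre : reN k i ≠ 0 := by omega
  have hrange : 1 ≤ k ∧ k ≤ mu.len ∧ 1 ≤ i ∧ i ≤ nu.len := by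
    by_contra hc
    exact hre (nf.supp k i hc).2
  exact ⟨hk, hkmu, hrange.2.2.1, hrange.2.2.2, hki⟩

end Construction

end ARY
namespace ARY

open Finset

section Counting

variable {lam mu nu : NPartition} {rbN reN : ℕ → ℕ → ℕ}

lemma NatFacts.boxSet_eq (nf : NatFacts lam mu nu rbN reN) {k : ℕ} (hk : 1 ≤ k) (i : ℕ) :
    {j | IsBox lam nu i j ∧ boxF lam nu rbN i j = k}
      = ↑(Finset.Ioc (B lam rbN (k-1) i) (B lam rbN k i)) := by
  ext j
  rw [Finset.mem_coe, Finset.mem_Ioc, Set.mem_setOf_eq]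
  exact nf.boxF_eq_iff hk

lemma NatFacts.edgeSet_eq (nf : NatFacts lam mu nu rbN reN) {k : ℕ} (hk : 1 ≤ k) (i : ℕ) :
    {j | k ∈ edgeF lam mu rbN reN i j}
      = ↑(Finset.Ioc (B lam rbN k (i+1)) (B lam rbN k (i+1) + reN k i)) := by
  ext j
  rw [Finset.mem_coe, Finset.mem_Ioc, Set.mem_setOf_eq]
  exact nf.edgeF_mem_iff hk

lemma NatFacts.isBox_row_le (nf : NatFacts lam mu nu rbN reN) {i j : ℕ}
    (hb : IsBox lam nu i j) : i ≤ nu.len := by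
  refine le_len_of_part_ne_zero nu ?_
  have := hb.2.1
  have := hb.2.2
  omega

lemma NatFacts.boxContentSet_eq (nf : NatFacts lam mu nu rbN reN) {k : ℕ} (hk : 1 ≤ k) :
    {q : ℕ × ℕ | boxF lam nu rbN q.1 q.2 = k}
      = ↑((Finset.Icc 1 nu.len).biUnion fun i =>
          ({i} : Finset ℕ) ×ˢ Finset.Ioc (B lam rbN (k-1) i) (B lam rbN k i)) := by
  ext ⟨i, j⟩
  simp only [Set.mem_setOf_eq, Finset.coe_biUnion, Finset.mem_coe, Finset.mem_biUnion,
    Finset.mem_Icc, Finset.mem_product, Finset.mem_singleton, Finset.mem_Ioc, Set.mem_iUnion]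
  constructor
  · intro hbox
    have hb : IsBox lam nu i j := isBox_of_boxF_ne (i := i) (j := j) (rbN := rbN) (by omega)
    have hint := (nf.boxF_eq_iff hk).mp ⟨hb, hbox⟩
    exact ⟨i, ⟨⟨hb.1, nf.isBox_row_le hb⟩, rfl, hint⟩⟩
  · rintro ⟨i', ⟨hi', rfl, hint⟩⟩
    exact ((nf.boxF_eq_iff hk).mpr hint).2

lemma NatFacts.edgeContentSet_eq (nf : NatFacts lam mu nu rbN reN) {k : ℕ} (hk : 1 ≤ k) :
    {q : ℕ × ℕ | k ∈ edgeF lam mu rbN reN q.1 q.2}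
      = ↑((Finset.Icc 1 nu.len).biUnion fun i =>
          ({i} : Finset ℕ) ×ˢ
            Finset.Ioc (B lam rbN k (i+1)) (B lam rbN k (i+1) + reN k i)) := by
  ext ⟨i, j⟩
  simp only [Set.mem_setOf_eq, Finset.coe_biUnion, Finset.mem_coe, Finset.mem_biUnion,
    Finset.mem_Icc, Finset.mem_product, Finset.mem_singleton, Finset.mem_Ioc, Set.mem_iUnion]
  constructor
  · intro hmem
    obtain ⟨_, _, hi1, hiL, _⟩ := nf.edgeF_ranges hmem
    exact ⟨i, ⟨⟨hi1, hiL⟩, rfl, (nf.edgeF_mem_iff hk).mp hmem⟩⟩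
  · rintro ⟨i', ⟨hi', rfl, hint⟩⟩
    exact (nf.edgeF_mem_iff hk).mpr hint

lemma rowInterval_card (a b : ℕ → ℕ) (s : Finset ℕ) :
    (s.biUnion fun i => ({i} : Finset ℕ) ×ˢ Finset.Ioc (a i) (b i)).card
      = ∑ i ∈ s, (b i - a i) := by
  rw [Finset.card_biUnion]
  · refine Finset.sum_congr rfl fun i _ => ?_
    rw [Finset.card_product, Finset.card_singleton, Nat.card_Ioc, one_mul]
  · intro x _ y _ hxy
    rw [Function.onFun, Finset.disjoint_left]
    rintro ⟨i, j⟩ hx hy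
    simp only [Finset.mem_product, Finset.mem_singleton] at hx hy
    exact hxy (hx.1.symm.trans hy.1)

lemma NatFacts.rbN_eq_sub (nf : NatFacts lam mu nu rbN reN) {k : ℕ} (hk : 1 ≤ k) (i : ℕ) :
    B lam rbN k i - B lam rbN (k-1) i = rbN k i := by
  rw [B_pred_add lam rbN hk i]
  omega

lemma NatFacts.content_eq (nf : NatFacts lam mu nu rbN reN) {k : ℕ} (hk : 1 ≤ k) :
    Set.ncard {q : ℕ × ℕ | boxF lam nu rbN q.1 q.2 = k}
      + Set.ncard {q : ℕ × ℕ | k ∈ edgeF lam mu rbN reN q.1 q.2} = mu.part k := by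
  rw [nf.boxContentSet_eq hk, nf.edgeContentSet_eq hk, Set.ncard_coe_finset,
    Set.ncard_coe_finset, rowInterval_card, rowInterval_card]
  rw [← Finset.sum_add_distrib, ← nf.content k hk]
  refine Finset.sum_congr rfl fun i _ => ?_
  rw [nf.rbN_eq_sub hk]
  omega

end Counting

end ARY
namespace ARY

open Finset

section Tab

variable {lam mu nu : NPartition} {rbN reN : ℕ → ℕ → ℕ}

/-- The constructed edge-labeled tableau. -/
noncomputable def tab (nf : NatFacts lam mu nu rbN reN) : EdgeTableau lam mu nu where
  subset := nf.subset
  box := boxF lam nu rbN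
  edge := edgeF lam mu rbN reN
  box_pos := fun i j hb => nf.boxF_pos hb
  box_eq_zero := fun i j hb => boxF_eq_zero hb
  edge_pos := fun i j e he => (edgeF_mem.mp he).1
  edge_eq_empty := by
    intro i j hne
    rw [Finset.eq_empty_iff_forall_notMem]
    intro k hk
    apply hne
    obtain ⟨hk1, hkmu, hki, h1, h2⟩ := edgeF_mem.mp hk
    obtain ⟨_, _, hi1, hiL, _⟩ := nf.edgeF_ranges hk
    refine ⟨hi1, by omega, ?_, ?_⟩
    · calc j ≤ B lam rbN k (i+1) + reN k i := h2
        _ ≤ B lam rbN (k-1) i := nf.diag hk1 hi1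
        _ ≤ nu.part i := nf.B_le_nu _ hi1
    · calc lam.part (i+1) ≤ B lam rbN k (i+1) := lam_le_B lam rbN _ _
        _ < j := h1
  row_weak := by
    intro i j hb hb2
    refine boxF_le_of hb ?_
    exact le_trans (Nat.le_succ j) (nf.le_B_boxF hb2)
  col_strict := by
    intro i j hb hb2
    have hk1 : 1 ≤ boxF lam nu rbN (i+1) j := nf.boxF_pos hb2
    have h2 := nf.le_B_boxF hb2
    have : j ≤ B lam rbN (boxF lam nu rbN (i+1) j - 1) i := by
      calc j ≤ B lam rbN (boxF lam nu rbN (i+1) j) (i+1) := h2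
        _ ≤ B lam rbN (boxF lam nu rbN (i+1) j) (i+1) + reN (boxF lam nu rbN (i+1) j) i :=
            Nat.le_add_right _ _
        _ ≤ B lam rbN (boxF lam nu rbN (i+1) j - 1) i := nf.diag hk1 hb.1
    have := boxF_le_of hb this
    omega
  edge_gt_box := by
    intro i j hb k hk
    obtain ⟨hk1, hkmu, hki, h1, h2⟩ := edgeF_mem.mp hk
    obtain ⟨_, _, hi1, hiL, _⟩ := nf.edgeF_ranges hk
    have : j ≤ B lam rbN (k-1) i := le_trans h2 (nf.diag hk1 hi1)
    have := boxF_le_of hb this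
    omega
  edge_lt_box := by
    intro i j hb2 k hk
    obtain ⟨hk1, hkmu, hki, h1, h2⟩ := edgeF_mem.mp hk
    exact nf.lt_boxF_of hb2 h1
  not_too_high := fun i j e he => (edgeF_mem.mp he).2.2.1
  content := fun k hk => nf.content_eq hk

end Tab

end ARY
namespace ARY

open Finset

/-! ### List infrastructure -/

lemma list_range_map_sum (n : ℕ) (g : ℕ → ℕ) :
    ((List.range n).map g).sum = ∑ i ∈ Finset.range n, g i := by
  induction n with
  | zero => simp
  | succ n ih => rw [List.range_succ, List.map_append, List.sum_append, ih,
      Finset.sum_range_succ]; simp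

lemma count_flatMap_range (n : ℕ) (f : ℕ → List ℕ) (m : ℕ) :
    ((List.range n).flatMap f).count m = ∑ i0 ∈ Finset.range n, (f i0).count m := by
  rw [List.count_flatMap, list_range_map_sum]
  rfl

/-- Pointwise criterion for a word to be lattice : before every occurrence of
`k+1` there are strictly more `k`s than `k+1`s. -/
lemma lattice_of_pointwise (w : List ℕ)
    (H : ∀ k t, 1 ≤ k → ∀ (ht : t < w.length), w[t] = k + 1 →
      (w.take t).count (k+1) < (w.take t).count k) : IsLatticeWord w := by
  intro k hk t
  induction t with
  | zero => simp
  | succ t ih =>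
    rcases le_or_gt w.length t with hle | hlt
    · have h1 : w.take (t+1) = w := List.take_of_length_le (by omega)
      have h2 : w.take t = w := List.take_of_length_le hle
      rw [h1, ← h2]
      exact ih
    · rw [List.take_succ, List.getElem?_eq_getElem hlt]
      simp only [Option.toList_some, List.count_append]
      by_cases he : w[t] = k + 1
      · have := H k t hk hlt he
        have hcnt : [w[t]].count (k+1) ≤ 1 := List.count_le_length
        omega
      · have h0 : ([w[t]] : List ℕ).count (k+1) = 0 := by
          simp [List.count_singleton]
          omega
        have h1 : ([w[t]] : List ℕ).count k ≥ 0 := Nat.zero_le _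
        omega

/-- Cutting a flatMap over a reversed range. -/
lemma cut_rev (g : ℕ → List ℕ) (n : ℕ) : ∀ t,
    t < (((List.range n).reverse).flatMap g).length →
    ∃ j0 s, j0 < n ∧ s < (g j0).length ∧
      (((List.range n).reverse).flatMap g)[t]? = (g j0)[s]? ∧
      ∀ m, ((((List.range n).reverse).flatMap g).take t).count m
        = (∑ j' ∈ Finset.Ico (j0+1) n, (g j').count m) + ((g j0).take s).count m := by
  induction n with
  | zero => intro t ht; simp at ht
  | succ n ih =>
    intro t ht
    have hw : ((List.range (n+1)).reverse).flatMap g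
        = g n ++ ((List.range n).reverse).flatMap g := by
      rw [List.range_succ, List.reverse_append]
      simp
    rcases lt_or_ge t (g n).length with hlt | hge
    · refine ⟨n, t, by omega, hlt, ?_, ?_⟩
      · rw [hw, List.getElem?_append_left hlt]
      · intro m
        rw [hw, List.take_append_of_le_length (by omega)]
        simp
    · rw [hw] at ht ⊢
      rw [List.length_append] at ht
      obtain ⟨t', rfl⟩ : ∃ t', t = (g n).length + t' := ⟨t - (g n).length, by omega⟩
      obtain ⟨j0, s, hj0, hs, helem, hcnt⟩ := ih t' (by omega)
      refine ⟨j0, s, by omega, hs, ?_, ?_⟩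
      · rw [List.getElem?_append_right (by omega)]
        simpa using helem
      · intro m
        rw [List.take_length_add_append, List.count_append, hcnt m,
          Finset.sum_Ico_succ_top (by omega : j0 + 1 ≤ n)]
        ring

/-- Cutting a flatMap over a range. -/
lemma cut_fwd (g : ℕ → List ℕ) (n : ℕ) : ∀ t,
    t < ((List.range n).flatMap g).length →
    ∃ i0 s, i0 < n ∧ s < (g i0).length ∧
      ((List.range n).flatMap g)[t]? = (g i0)[s]? ∧
      ∀ m, (((List.range n).flatMap g).take t).count m
        = (∑ i' ∈ Finset.range i0, (g i').count m) + ((g i0).take s).count m := by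
  induction n with
  | zero => intro t ht; simp at ht
  | succ n ih =>
    intro t ht
    have hw : (List.range (n+1)).flatMap g = (List.range n).flatMap g ++ g n := by
      rw [List.range_succ, List.flatMap_append]
      simp
    rcases lt_or_ge t ((List.range n).flatMap g).length with hlt | hge
    · obtain ⟨i0, s, hi0, hs, helem, hcnt⟩ := ih t hlt
      refine ⟨i0, s, by omega, hs, ?_, ?_⟩
      · rw [hw, List.getElem?_append_left hlt, helem]
      · intro m
        rw [hw, List.take_append_of_le_length (by omega), hcnt m]
    · rw [hw] at ht ⊢
      rw [List.length_append] at ht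
      obtain ⟨s, rfl⟩ : ∃ s, t = ((List.range n).flatMap g).length + s :=
        ⟨t - ((List.range n).flatMap g).length, by omega⟩
      refine ⟨n, s, by omega, by omega, ?_, ?_⟩
      · rw [List.getElem?_append_right (by omega)]
        simp
      · intro m
        rw [List.take_length_add_append, List.count_append, count_flatMap_range]

lemma sort_pairwise_lt (s : Finset ℕ) {n n' : ℕ} (hn : n < (s.sort (· ≤ ·)).length)
    (hn' : n' < (s.sort (· ≤ ·)).length) (h : n < n') :
    (s.sort (· ≤ ·))[n] < (s.sort (· ≤ ·))[n'] := by
  have hsorted : (s.sort (· ≤ ·)).Pairwise (· < ·) := List.sortedLT_iff_pairwise.mp (Finset.sortedLT_sort s)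
  exact List.pairwise_iff_getElem.mp hsorted n n' hn hn' h

/-- In the sorted list of a finset, an element smaller than the one at an
occurrence appears before it. -/
lemma take_sort_count_ge (s : Finset ℕ) {s' : ℕ} (hs' : s' < (s.sort (· ≤ ·)).length)
    {e m : ℕ} (he : (s.sort (· ≤ ·))[s'] = e) (hm : m ∈ s) (hme : m < e) :
    1 ≤ (((s.sort (· ≤ ·)).take s')).count m := by
  have hmem : m ∈ s.sort (· ≤ ·) := (Finset.mem_sort _).mpr hm
  obtain ⟨n, hn, hne⟩ := List.getElem_of_mem hmem
  have hns' : n < s' := by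
    by_contra hc
    rcases Nat.lt_or_ge s' n with hlt | hge2
    · have := sort_pairwise_lt s hs' hn hlt
      omega
    · have hns : n = s' := by omega
      subst hns
      have hme2 : m = e := by rw [← hne]; exact he
      omega
  refine List.count_pos_iff.mpr ?_
  have hlen : n < ((s.sort (· ≤ ·)).take s').length := by
    rw [List.length_take]
    omega
  have hel : ((s.sort (· ≤ ·)).take s')[n] = m := by
    rw [List.getElem_take]
    exact hne
  exact hel ▸ List.getElem_mem hlen

lemma take_sort_count_eq_zero (s : Finset ℕ) {s' : ℕ} (hs' : s' < (s.sort (· ≤ ·)).length)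
    {e m : ℕ} (he : (s.sort (· ≤ ·))[s'] = e) (hme : e ≤ m) :
    (((s.sort (· ≤ ·)).take s')).count m = 0 := by
  rw [List.count_eq_zero]
  intro hmem
  obtain ⟨n, hn, hne⟩ := List.getElem_of_mem hmem
  have hlen := hn
  rw [List.length_take] at hlen
  have hne' : (s.sort (· ≤ ·))[n]'(by omega) = m := by
    rw [← hne, List.getElem_take]
  have := sort_pairwise_lt s (n := n) (n' := s') (by omega) hs' (by omega)
  omega

end ARY
namespace ARY

open Finset

/-! ### Interval clipping arithmetic -/

/-- `clip a b j = #((a,b] ∩ (j,∞))`. -/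
def clip (a b j : ℕ) : ℕ := b - max a j

lemma clip_zero {a b j : ℕ} (h : b ≤ j) : clip a b j = 0 := by unfold clip; omega

lemma clip_full {a b j : ℕ} (h : j ≤ a) : clip a b j = b - a := by unfold clip; omega

lemma clip_split (a b j : ℕ) :
    clip a b j = clip a b (j+1) + (if a < j+1 ∧ j+1 ≤ b then 1 else 0) := by
  unfold clip; split_ifs <;> omega

lemma clip_ineq {Bb p q r x : ℕ} (h1 : q ≤ p) (h2 : p ≤ Bb) (h3 : q + r ≤ p) (h4 : q ≤ x)
    (h5 : x ≤ Bb) : (Bb - p) + r ≤ clip p Bb x + clip q (q + r) x + (x - q) := by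
  unfold clip; omega

lemma sum_indicator_Ioc {a b j N : ℕ} (hb : b ≤ N) :
    (∑ c ∈ Finset.Ioc j N, if a < c ∧ c ≤ b then (1:ℕ) else 0) = clip a b j := by
  rw [Finset.sum_boole]
  have hfil : (Finset.Ioc j N).filter (fun c => a < c ∧ c ≤ b) = Finset.Ioc (max a j) b := by
    ext c
    simp only [Finset.mem_filter, Finset.mem_Ioc]
    omega
  rw [hfil, Nat.card_Ioc]
  simp [clip]

lemma sum_shift_Ioc (f : ℕ → ℕ) (a b : ℕ) :
    ∑ x ∈ Finset.Ico a b, f (x+1) = ∑ c ∈ Finset.Ioc a b, f c := by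
  rw [← Finset.Ico_add_one_add_one_eq_Ioc, ← Finset.map_add_right_Ico a b 1, Finset.sum_map]
  rfl

lemma sum_shift_one (f : ℕ → ℕ) (n : ℕ) :
    ∑ x ∈ Finset.Ico 0 n, f (x+1) = ∑ x ∈ Finset.Ico 1 (n+1), f x := by
  rw [← Finset.map_add_right_Ico 0 n 1, Finset.sum_map]
  rfl

section CountLemmas

variable {lam mu nu : NPartition} {rbN reN : ℕ → ℕ → ℕ}

/-- Extended lattice condition (F), valid one row beyond `ℓ(ν)`. -/
lemma NatFacts.latt_ext (nf : NatFacts lam mu nu rbN reN) {k i : ℕ} (hk : 1 ≤ k)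
    (hkm : k ≤ mu.len) (hi : 1 ≤ i) (hiL : i ≤ nu.len + 1) :
    rbN (k+1) i + ∑ i' ∈ Finset.Ico 1 i, (rbN (k+1) i' + reN (k+1) i')
      ≤ ∑ i' ∈ Finset.Ico 1 i, (rbN k i' + reN k i') := by
  rcases le_or_gt i nu.len with h | h
  · exact nf.latt k i hk hkm hi h
  · obtain rfl : i = nu.len + 1 := by omega
    have h1 : rbN (k+1) (nu.len+1) = 0 := (nf.supp _ _ (by omega)).1
    rw [h1, zero_add]
    have he : Finset.Ico 1 (nu.len + 1) = Finset.Icc 1 nu.len := Finset.Ico_add_one_right_eq_Icc 1 nu.len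
    rw [he, nf.content (k+1) (by omega), nf.content k hk]
    exact part_anti mu (by omega)

lemma count_boxWord (nf : NatFacts lam mu nu rbN reN) {m : ℕ} (hm : 1 ≤ m) (i j : ℕ) :
    ((tab nf).boxWord i j).count m
      = if B lam rbN (m-1) i < j ∧ j ≤ B lam rbN m i then 1 else 0 := by
  show (if IsBox lam nu i j then [boxF lam nu rbN i j] else []).count m = _
  by_cases hb : IsBox lam nu i j
  · rw [if_pos hb]
    by_cases hint : B lam rbN (m-1) i < j ∧ j ≤ B lam rbN m i
    · have heq := (nf.boxF_eq_iff hm).mpr hint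
      rw [if_pos hint, List.count_singleton, if_pos (by simp [heq.2])]
    · have hne : boxF lam nu rbN i j ≠ m := fun he => hint ((nf.boxF_eq_iff hm).mp ⟨hb, he⟩)
      rw [if_neg hint, List.count_singleton, if_neg (by simp [hne])]
  · have hint : ¬(B lam rbN (m-1) i < j ∧ j ≤ B lam rbN m i) :=
      fun hint => hb ((nf.boxF_eq_iff hm).mpr hint).1
    rw [if_neg hb, if_neg hint]
    rfl

lemma count_edgeWord (nf : NatFacts lam mu nu rbN reN) {m : ℕ} (hm : 1 ≤ m) (i j : ℕ) :
    ((tab nf).edgeWord i j).count m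
      = if B lam rbN m (i+1) < j ∧ j ≤ B lam rbN m (i+1) + reN m i then 1 else 0 := by
  show ((edgeF lam mu rbN reN i j).sort (· ≤ ·)).count m = _
  rw [List.Nodup.count (Finset.sort_nodup _ _)]
  by_cases hmem : m ∈ edgeF lam mu rbN reN i j
  · rw [if_pos ((Finset.mem_sort _).mpr hmem), if_pos ((nf.edgeF_mem_iff hm).mp hmem)]
  · rw [if_neg (fun hc => hmem ((Finset.mem_sort _).mp hc)),
      if_neg (fun hc => hmem ((nf.edgeF_mem_iff hm).mpr hc))]

/-- The indicator of row `i0+1` at column `c` (box and edge). -/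
def CH (lam : NPartition) (rbN reN : ℕ → ℕ → ℕ) (m i0 c : ℕ) : ℕ :=
  (if B lam rbN (m-1) (i0+1) < c ∧ c ≤ B lam rbN m (i0+1) then 1 else 0)
    + (if B lam rbN m (i0+2) < c ∧ c ≤ B lam rbN m (i0+2) + reN m (i0+1) then 1 else 0)

/-- The count of letter `m` in row `i0+1` (box and edge) over columns `> c`. -/
def FA (lam : NPartition) (rbN reN : ℕ → ℕ → ℕ) (m i0 c : ℕ) : ℕ :=
  clip (B lam rbN (m-1) (i0+1)) (B lam rbN m (i0+1)) c
    + clip (B lam rbN m (i0+2)) (B lam rbN m (i0+2) + reN m (i0+1)) c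

lemma FA_split (lam : NPartition) (rbN reN : ℕ → ℕ → ℕ) (m i0 c : ℕ) :
    FA lam rbN reN m i0 c = FA lam rbN reN m i0 (c+1) + CH lam rbN reN m i0 (c+1) := by
  unfold FA CH
  rw [clip_split (B lam rbN (m-1) (i0+1)) (B lam rbN m (i0+1)) c,
    clip_split (B lam rbN m (i0+2)) _ c]
  ring

lemma count_chunk (nf : NatFacts lam mu nu rbN reN) {m : ℕ} (hm : 1 ≤ m) (i0 c : ℕ) :
    (((tab nf).boxWord (i0+1) c ++ (tab nf).edgeWord (i0+1) c)).count m
      = CH lam rbN reN m i0 c := by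
  rw [List.count_append, count_boxWord nf hm, count_edgeWord nf hm]
  rfl

/-- Count of letter `m` over the full columns strictly right of column `j0+1`. -/
lemma count_cols_gt (nf : NatFacts lam mu nu rbN reN) {m : ℕ} (hm : 1 ≤ m) (j0 : ℕ) :
    (∑ j' ∈ Finset.Ico (j0+1) (nu.part 1),
      ((List.range nu.len).flatMap fun i0 =>
        (tab nf).boxWord (i0+1) (j'+1) ++ (tab nf).edgeWord (i0+1) (j'+1)).count m)
      = ∑ i0 ∈ Finset.range nu.len, FA lam rbN reN m i0 (j0+1) := by
  have hcol : ∀ j', ((List.range nu.len).flatMap fun i0 =>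
      (tab nf).boxWord (i0+1) (j'+1) ++ (tab nf).edgeWord (i0+1) (j'+1)).count m
      = ∑ i0 ∈ Finset.range nu.len, CH lam rbN reN m i0 (j'+1) := by
    intro j'
    rw [count_flatMap_range]
    exact Finset.sum_congr rfl fun i0 _ => count_chunk nf hm i0 (j'+1)
  calc (∑ j' ∈ Finset.Ico (j0+1) (nu.part 1),
      ((List.range nu.len).flatMap fun i0 =>
        (tab nf).boxWord (i0+1) (j'+1) ++ (tab nf).edgeWord (i0+1) (j'+1)).count m)
      = ∑ j' ∈ Finset.Ico (j0+1) (nu.part 1), ∑ i0 ∈ Finset.range nu.len,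
          CH lam rbN reN m i0 (j'+1) := Finset.sum_congr rfl fun j' _ => hcol j'
    _ = ∑ c ∈ Finset.Ioc (j0+1) (nu.part 1), ∑ i0 ∈ Finset.range nu.len,
          CH lam rbN reN m i0 c :=
        sum_shift_Ioc (fun c => ∑ i0 ∈ Finset.range nu.len, CH lam rbN reN m i0 c) (j0+1)
          (nu.part 1)
    _ = ∑ i0 ∈ Finset.range nu.len, ∑ c ∈ Finset.Ioc (j0+1) (nu.part 1),
          CH lam rbN reN m i0 c := Finset.sum_comm
    _ = ∑ i0 ∈ Finset.range nu.len, FA lam rbN reN m i0 (j0+1) := by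
        refine Finset.sum_congr rfl fun i0 _ => ?_
        unfold CH FA
        rw [Finset.sum_add_distrib, sum_indicator_Ioc, sum_indicator_Ioc]
        · calc B lam rbN m (i0+2) + reN m (i0+1)
              ≤ B lam rbN (m-1) (i0+1) := nf.diag hm (by omega)
            _ ≤ nu.part (i0+1) := nf.B_le_nu _ (by omega)
            _ ≤ nu.part 1 := part_anti nu (by omega)
        · calc B lam rbN m (i0+1) ≤ nu.part (i0+1) := nf.B_le_nu _ (by omega)
            _ ≤ nu.part 1 := part_anti nu (by omega)

end CountLemmas

end ARY
namespace ARY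

open Finset

section Lattice

variable {lam mu nu : NPartition} {rbN reN : ℕ → ℕ → ℕ}

theorem lattice_wc (nf : NatFacts lam mu nu rbN reN) : IsLatticeWord (tab nf).wc := by
  apply lattice_of_pointwise
  intro k t hk ht helem
  -- the column reading word as a double flatMap
  set T := tab nf with hT
  set g : ℕ → List ℕ := fun j0 =>
    (List.range nu.len).flatMap fun i0 => T.boxWord (i0+1) (j0+1) ++ T.edgeWord (i0+1) (j0+1)
    with hg
  have hwc : T.wc = ((List.range (nu.part 1)).reverse).flatMap g := rfl
  have ht' : t < (((List.range (nu.part 1)).reverse).flatMap g).length := ht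
  obtain ⟨j0, s, hj0, hs, helem1, hcnt1⟩ := cut_rev g (nu.part 1) t ht'
  have hs' : s < ((List.range nu.len).flatMap fun i0 =>
      T.boxWord (i0+1) (j0+1) ++ T.edgeWord (i0+1) (j0+1)).length := hs
  obtain ⟨i0x, s2, hi0x, hs2, helem2, hcnt2⟩ :=
    cut_fwd (fun i0 => T.boxWord (i0+1) (j0+1) ++ T.edgeWord (i0+1) (j0+1)) nu.len s hs'
  -- the element at the cut is `k+1`
  have helemA : ((T.boxWord (i0x+1) (j0+1) ++ T.edgeWord (i0x+1) (j0+1)))[s2]? = some (k+1) := by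
    rw [← helem2, ← helem1, hwc] at *
    rw [List.getElem?_eq_getElem ht']
    exact congrArg some helem
  -- master count formula for complete rows
  have hcount : ∀ m, 1 ≤ m → (T.wc.take t).count m
      = (∑ i0 ∈ Finset.Ico 0 i0x, FA lam rbN reN m i0 j0)
        + (∑ i0 ∈ Finset.Ico i0x nu.len, FA lam rbN reN m i0 (j0+1))
        + ((T.boxWord (i0x+1) (j0+1) ++ T.edgeWord (i0x+1) (j0+1)).take s2).count m := by
    intro m hm
    have e0 : (T.wc.take t).count m
        = (∑ j' ∈ Finset.Ico (j0+1) (nu.part 1), (g j').count m)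
          + ((∑ i0 ∈ Finset.range i0x,
              (T.boxWord (i0+1) (j0+1) ++ T.edgeWord (i0+1) (j0+1)).count m)
            + ((T.boxWord (i0x+1) (j0+1) ++ T.edgeWord (i0x+1) (j0+1)).take s2).count m) := by
      rw [hwc, hcnt1 m]
      congr 1
      exact hcnt2 m
    have e1 : (∑ j' ∈ Finset.Ico (j0+1) (nu.part 1), (g j').count m)
        = ∑ i0 ∈ Finset.range nu.len, FA lam rbN reN m i0 (j0+1) := count_cols_gt nf hm j0
    have e2 : (∑ i0 ∈ Finset.range i0x,
        (T.boxWord (i0+1) (j0+1) ++ T.edgeWord (i0+1) (j0+1)).count m)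
        = ∑ i0 ∈ Finset.Ico 0 i0x, CH lam rbN reN m i0 (j0+1) := by
      rw [Finset.range_eq_Ico]
      exact Finset.sum_congr rfl fun i0 _ => count_chunk nf hm i0 (j0+1)
    have e3 : (∑ i0 ∈ Finset.range nu.len, FA lam rbN reN m i0 (j0+1))
        = (∑ i0 ∈ Finset.Ico 0 i0x, FA lam rbN reN m i0 (j0+1))
          + ∑ i0 ∈ Finset.Ico i0x nu.len, FA lam rbN reN m i0 (j0+1) := by
      rw [Finset.range_eq_Ico,
        ← Finset.sum_Ico_consecutive (fun i0 => FA lam rbN reN m i0 (j0+1))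
          (Nat.zero_le i0x) (le_of_lt hi0x)]
    have e4 : (∑ i0 ∈ Finset.Ico 0 i0x, FA lam rbN reN m i0 (j0+1))
        + (∑ i0 ∈ Finset.Ico 0 i0x, CH lam rbN reN m i0 (j0+1))
        = ∑ i0 ∈ Finset.Ico 0 i0x, FA lam rbN reN m i0 j0 := by
      rw [← Finset.sum_add_distrib]
      exact Finset.sum_congr rfl fun i0 _ => (FA_split lam rbN reN m i0 j0).symm
    omega
  -- case split : box occurrence or edge occurrence
  rcases Nat.lt_or_ge s2 (T.boxWord (i0x+1) (j0+1)).length with hcase | hcase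
  · -- ===== BOX CASE =====
    have hb : IsBox lam nu (i0x+1) (j0+1) := by
      by_contra hb
      have : T.boxWord (i0x+1) (j0+1) = [] := by
        show (if IsBox lam nu (i0x+1) (j0+1) then _ else []) = []
        rw [if_neg hb]
      rw [this] at hcase
      simp at hcase
    have hbw : T.boxWord (i0x+1) (j0+1) = [boxF lam nu rbN (i0x+1) (j0+1)] := by
      show (if IsBox lam nu (i0x+1) (j0+1) then [boxF lam nu rbN (i0x+1) (j0+1)] else []) = _
      rw [if_pos hb]
    have hs20 : s2 = 0 := by
      rw [hbw] at hcase
      simpa using hcase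
    have hfill : boxF lam nu rbN (i0x+1) (j0+1) = k + 1 := by
      rw [List.getElem?_append_left hcase, hbw, hs20] at helemA
      simpa using helemA
    have hint := (nf.boxF_eq_iff (show 1 ≤ k+1 by omega)).mp ⟨hb, hfill⟩
    simp only [Nat.add_sub_cancel] at hint
    obtain ⟨h1, h2⟩ := hint
    -- ranges
    have hrb1 : B lam rbN (k+1) (i0x+1) = B lam rbN k (i0x+1) + rbN (k+1) (i0x+1) :=
      B_succ lam rbN k (i0x+1)
    have hrbpos : 1 ≤ rbN (k+1) (i0x+1) := by omega
    have hranges : 1 ≤ k+1 ∧ k+1 ≤ mu.len ∧ 1 ≤ i0x+1 ∧ i0x+1 ≤ nu.len := by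
      by_contra hc
      have := (nf.supp (k+1) (i0x+1) hc).1
      omega
    have hik : k+1 ≤ i0x+1 := by
      by_contra hc
      have := (nf.high (k+1) (i0x+1) (by omega)).1
      omega
    have hi1 : 1 ≤ i0x := by omega
    -- count of k+1
    have htake : ((T.boxWord (i0x+1) (j0+1) ++ T.edgeWord (i0x+1) (j0+1)).take s2) = [] := by
      rw [hs20]
      rfl
    have ck1 : (T.wc.take t).count (k+1)
        = (∑ i0 ∈ Finset.Ico 0 i0x, (rbN (k+1) (i0+1) + reN (k+1) (i0+1)))
          + (B lam rbN (k+1) (i0x+1) - (j0+1)) := by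
      rw [hcount (k+1) (by omega), htake, List.count_nil]
      have eA : ∀ i0 ∈ Finset.Ico 0 i0x, FA lam rbN reN (k+1) i0 j0
          = rbN (k+1) (i0+1) + reN (k+1) (i0+1) := by
        intro i0 hi0
        rw [Finset.mem_Ico] at hi0
        have hle1 : j0 + 1 ≤ B lam rbN k (i0+1) := by
          calc j0 + 1 ≤ B lam rbN (k+1) (i0x+1) := h2
            _ ≤ B lam rbN k i0x := by
                have := nf.diag (m := k+1) (i := i0x) (by omega) hi1
                simpa using le_trans (Nat.le_add_right _ _) this
            _ ≤ B lam rbN k (i0+1) := nf.B_anti k (by omega) (by omega)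
        have hle2 : j0 + 1 ≤ B lam rbN (k+1) (i0+2) := by
          calc j0 + 1 ≤ B lam rbN (k+1) (i0x+1) := h2
            _ ≤ B lam rbN (k+1) (i0+2) := nf.B_anti (k+1) (by omega) (by omega)
        unfold FA
        simp only [Nat.add_sub_cancel]
        rw [clip_full (by omega), clip_full (by omega)]
        have := B_succ lam rbN k (i0+1)
        omega
      rw [Finset.sum_congr rfl eA]
      have eB : (∑ i0 ∈ Finset.Ico i0x nu.len, FA lam rbN reN (k+1) i0 (j0+1))
          = B lam rbN (k+1) (i0x+1) - (j0+1) := by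
        rw [Finset.sum_eq_sum_Ico_succ_bot (by omega : i0x < nu.len)]
        have eC : (∑ i0 ∈ Finset.Ico (i0x+1) nu.len, FA lam rbN reN (k+1) i0 (j0+1)) = 0 := by
          refine Finset.sum_eq_zero fun i0 hi0 => ?_
          rw [Finset.mem_Ico] at hi0
          have hz1 : B lam rbN (k+1) (i0+1) < j0 + 1 := by
            calc B lam rbN (k+1) (i0+1) ≤ B lam rbN k i0 := by
                  have := nf.diag (m := k+1) (i := i0) (by omega) (by omega)
                  simpa using le_trans (Nat.le_add_right _ _) this
              _ ≤ B lam rbN k (i0x+1) := nf.B_anti k (by omega) (by omega)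
              _ < j0 + 1 := h1
          have hz2 : B lam rbN (k+1) (i0+2) + reN (k+1) (i0+1) < j0 + 1 := by
            calc B lam rbN (k+1) (i0+2) + reN (k+1) (i0+1)
                ≤ B lam rbN k (i0+1) := by
                  have := nf.diag (m := k+1) (i := i0+1) (by omega) (by omega)
                  simpa using this
              _ ≤ B lam rbN k (i0x+1) := nf.B_anti k (by omega) (by omega)
              _ < j0 + 1 := h1
          unfold FA
          rw [clip_zero (by omega), clip_zero (by omega)]
          omega
        rw [eC]
        have hz3 : B lam rbN (k+1) (i0x+2) + reN (k+1) (i0x+1) ≤ B lam rbN k (i0x+1) := by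
          have := nf.diag (m := k+1) (i := i0x+1) (by omega) (by omega)
          simpa using this
        unfold FA clip
        simp only [Nat.add_sub_cancel]
        omega
      rw [eB]
      omega
    -- count of k
    have ckT : (T.wc.take t).count k ≥ ∑ i0 ∈ Finset.Ico 0 i0x, FA lam rbN reN k i0 j0 := by
      rw [hcount k hk]
      omega
    -- lower bound for the k-count of complete upper rows
    have e3 : (∑ i0 ∈ Finset.Ico 0 i0x, (rbN k (i0+1) + reN k (i0+1)))
        ≤ (∑ i0 ∈ Finset.Ico 0 i0x, FA lam rbN reN k i0 j0)
          + (j0 - B lam rbN k (i0x+1)) := by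
      have hbound : ∀ i0 ∈ Finset.Ico 0 i0x, (rbN k (i0+1) + reN k (i0+1))
          ≤ FA lam rbN reN k i0 j0
            + (if i0 = i0x - 1 then (j0 - B lam rbN k (i0x+1)) else 0) := by
        intro i0 hi0
        rw [Finset.mem_Ico] at hi0
        by_cases hsp : i0 = i0x - 1
        · -- the row just above the occurrence
          subst hsp
          rw [if_pos rfl]
          have hd1 : B lam rbN k (i0x+1) + reN k i0x ≤ B lam rbN (k-1) i0x := by
            have := nf.diag (m := k) (i := i0x) hk hi1
            have heq : i0x + 1 = i0x + 1 := rfl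
            simpa using this
          have hd2 : B lam rbN (k-1) i0x ≤ B lam rbN k i0x := B_mono lam rbN (by omega) i0x
          have hd4 : B lam rbN k (i0x+1) ≤ j0 := by omega
          have hd5 : j0 ≤ B lam rbN k i0x := by
            have hz : B lam rbN (k+1) (i0x+1) ≤ B lam rbN k i0x := by
              have := nf.diag (m := k+1) (i := i0x) (by omega) hi1
              simpa using le_trans (Nat.le_add_right _ _) this
            omega
          have hineq := clip_ineq (Bb := B lam rbN k i0x) (p := B lam rbN (k-1) i0x)
            (q := B lam rbN k (i0x+1)) (r := reN k i0x) (x := j0)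
            (by omega) hd2 hd1 hd4 hd5
          have hrbe : B lam rbN k i0x - B lam rbN (k-1) i0x = rbN k i0x :=
            nf.rbN_eq_sub hk i0x
          unfold FA
          have hi0e : i0x - 1 + 1 = i0x := by omega
          have hi0e2 : i0x - 1 + 2 = i0x + 1 := by omega
          rw [hi0e, hi0e2]
          omega
        · -- exact rows higher up
          rw [if_neg hsp]
          have hi02 : i0 + 2 ≤ i0x := by omega
          have hle1 : j0 ≤ B lam rbN (k-1) (i0+1) := by
            have hz1 : B lam rbN k i0x ≤ B lam rbN (k-1) (i0x - 1) := by
              have := nf.diag (m := k) (i := i0x - 1) hk (by omega)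
              have he : i0x - 1 + 1 = i0x := by omega
              rw [he] at this
              exact le_trans (Nat.le_add_right _ _) this
            have hz2 : B lam rbN (k-1) (i0x-1) ≤ B lam rbN (k-1) (i0+1) :=
              nf.B_anti (k-1) (by omega) (by omega)
            have hz : B lam rbN (k+1) (i0x+1) ≤ B lam rbN k i0x := by
              have := nf.diag (m := k+1) (i := i0x) (by omega) hi1
              simpa using le_trans (Nat.le_add_right _ _) this
            omega
          have hle2 : j0 ≤ B lam rbN k (i0+2) := by
            have hz : B lam rbN (k+1) (i0x+1) ≤ B lam rbN k i0x := by
              have := nf.diag (m := k+1) (i := i0x) (by omega) hi1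
              simpa using le_trans (Nat.le_add_right _ _) this
            have hz2 : B lam rbN k i0x ≤ B lam rbN k (i0+2) :=
              nf.B_anti k (by omega) (by omega)
            omega
          unfold FA
          rw [clip_full (by omega), clip_full (by omega)]
          have := nf.rbN_eq_sub hk (i0+1)
          have hmono : B lam rbN (k-1) (i0+1) ≤ B lam rbN k (i0+1) :=
            B_mono lam rbN (by omega) (i0+1)
          omega
      calc (∑ i0 ∈ Finset.Ico 0 i0x, (rbN k (i0+1) + reN k (i0+1)))
          ≤ ∑ i0 ∈ Finset.Ico 0 i0x, (FA lam rbN reN k i0 j0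
            + (if i0 = i0x - 1 then (j0 - B lam rbN k (i0x+1)) else 0)) :=
            Finset.sum_le_sum hbound
        _ = (∑ i0 ∈ Finset.Ico 0 i0x, FA lam rbN reN k i0 j0)
            + ∑ i0 ∈ Finset.Ico 0 i0x,
              (if i0 = i0x - 1 then (j0 - B lam rbN k (i0x+1)) else 0) :=
            Finset.sum_add_distrib
        _ ≤ (∑ i0 ∈ Finset.Ico 0 i0x, FA lam rbN reN k i0 j0)
            + (j0 - B lam rbN k (i0x+1)) := by
            rw [Finset.sum_ite_eq' (Finset.Ico 0 i0x) (i0x - 1)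
              (fun _ => j0 - B lam rbN k (i0x+1))]
            split_ifs <;> omega
    -- the lattice condition (F)
    have hF := nf.latt k (i0x+1) hk (by omega) (by omega) (by omega)
    -- index shifts
    have shk : (∑ i0 ∈ Finset.Ico 0 i0x, (rbN k (i0+1) + reN k (i0+1)))
        = ∑ i' ∈ Finset.Ico 1 (i0x+1), (rbN k i' + reN k i') :=
      sum_shift_one (fun i' => rbN k i' + reN k i') i0x
    have shk1 : (∑ i0 ∈ Finset.Ico 0 i0x, (rbN (k+1) (i0+1) + reN (k+1) (i0+1)))
        = ∑ i' ∈ Finset.Ico 1 (i0x+1), (rbN (k+1) i' + reN (k+1) i') :=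
      sum_shift_one (fun i' => rbN (k+1) i' + reN (k+1) i') i0x
    omega
  · -- ===== EDGE CASE =====
    obtain ⟨s3, rfl⟩ : ∃ s3, s2 = (T.boxWord (i0x+1) (j0+1)).length + s3 :=
      ⟨s2 - (T.boxWord (i0x+1) (j0+1)).length, by omega⟩
    have hs3 : s3 < (T.edgeWord (i0x+1) (j0+1)).length := by
      rw [List.length_append] at hs2
      omega
    have hfill : (T.edgeWord (i0x+1) (j0+1))[s3]'hs3 = k + 1 := by
      rw [List.getElem?_append_right hcase] at helemA
      simp only [Nat.add_sub_cancel_left] at helemA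
      rw [List.getElem?_eq_getElem hs3] at helemA
      exact Option.some.inj helemA
    have hs3' : s3 < ((edgeF lam mu rbN reN (i0x+1) (j0+1)).sort (· ≤ ·)).length := hs3
    have hfill' : ((edgeF lam mu rbN reN (i0x+1) (j0+1)).sort (· ≤ ·))[s3]'hs3' = k + 1 := hfill
    have hmem : k + 1 ∈ edgeF lam mu rbN reN (i0x+1) (j0+1) :=
      (Finset.mem_sort _).mp (hfill' ▸ List.getElem_mem hs3')
    obtain ⟨_, hk1mu, hi1', hiL, hki⟩ := nf.edgeF_ranges hmem
    obtain ⟨_, _, _, hq1x, hq2x⟩ := edgeF_mem.mp hmem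
    have hq1 : B lam rbN (k+1) (i0x+2) < j0 + 1 := hq1x
    have hq2 : j0 + 1 ≤ B lam rbN (k+1) (i0x+2) + reN (k+1) (i0x+1) := hq2x
    have hdiagE : B lam rbN (k+1) (i0x+2) + reN (k+1) (i0x+1) ≤ B lam rbN k (i0x+1) :=
      nf.diag (m := k+1) (i := i0x+1) (by omega) (by omega)
    have hjBk : j0 + 1 ≤ B lam rbN k (i0x+1) := by omega
    have htake : List.take ((T.boxWord (i0x+1) (j0+1)).length + s3)
        (T.boxWord (i0x+1) (j0+1) ++ T.edgeWord (i0x+1) (j0+1))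
        = T.boxWord (i0x+1) (j0+1) ++ List.take s3 (T.edgeWord (i0x+1) (j0+1)) :=
      List.take_length_add_append s3
    -- partial counts
    have cpart_k1 : ((T.boxWord (i0x+1) (j0+1) ++ T.edgeWord (i0x+1) (j0+1)).take
        ((T.boxWord (i0x+1) (j0+1)).length + s3)).count (k+1) = 0 := by
      rw [htake, List.count_append]
      have hbz : (T.boxWord (i0x+1) (j0+1)).count (k+1) = 0 := by
        rw [count_boxWord nf (by omega)]
        simp only [Nat.add_sub_cancel]
        rw [if_neg (by omega)]
      have hez : (List.take s3 (T.edgeWord (i0x+1) (j0+1))).count (k+1) = 0 :=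
        take_sort_count_eq_zero (edgeF lam mu rbN reN (i0x+1) (j0+1)) hs3' hfill' le_rfl
      omega
    have cpart_k : ((T.boxWord (i0x+1) (j0+1) ++ T.edgeWord (i0x+1) (j0+1)).take
        ((T.boxWord (i0x+1) (j0+1)).length + s3)).count k
        ≥ CH lam rbN reN k i0x (j0+1) := by
      rw [htake, List.count_append]
      have hbx : (T.boxWord (i0x+1) (j0+1)).count k
          = (if B lam rbN (k-1) (i0x+1) < j0+1 ∧ j0+1 ≤ B lam rbN k (i0x+1) then 1 else 0) :=
        count_boxWord nf hk _ _
      have hex : (List.take s3 (T.edgeWord (i0x+1) (j0+1))).count k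
          ≥ (if B lam rbN k (i0x+2) < j0+1 ∧ j0+1 ≤ B lam rbN k (i0x+2) + reN k (i0x+1)
              then 1 else 0) := by
        by_cases hint : B lam rbN k (i0x+2) < j0+1 ∧ j0+1 ≤ B lam rbN k (i0x+2) + reN k (i0x+1)
        · rw [if_pos hint]
          have hkmem : k ∈ edgeF lam mu rbN reN (i0x+1) (j0+1) :=
            (nf.edgeF_mem_iff hk).mpr hint
          exact take_sort_count_ge (edgeF lam mu rbN reN (i0x+1) (j0+1)) hs3' hfill'
            hkmem (by omega)
        · rw [if_neg hint]
          exact Nat.zero_le _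
      unfold CH
      omega
    -- count of k+1
    have ck1 : (T.wc.take t).count (k+1)
        = (∑ i0 ∈ Finset.Ico 0 i0x, (rbN (k+1) (i0+1) + reN (k+1) (i0+1)))
          + rbN (k+1) (i0x+1)
          + (B lam rbN (k+1) (i0x+2) + reN (k+1) (i0x+1) - (j0+1)) := by
      rw [hcount (k+1) (by omega), cpart_k1]
      have eA : ∀ i0 ∈ Finset.Ico 0 i0x, FA lam rbN reN (k+1) i0 j0
          = rbN (k+1) (i0+1) + reN (k+1) (i0+1) := by
        intro i0 hi0
        rw [Finset.mem_Ico] at hi0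
        have hle1 : j0 + 1 ≤ B lam rbN k (i0+1) := by
          calc j0 + 1 ≤ B lam rbN k (i0x+1) := hjBk
            _ ≤ B lam rbN k (i0+1) := nf.B_anti k (by omega) (by omega)
        have hle2 : j0 + 1 ≤ B lam rbN (k+1) (i0+2) := by
          calc j0 + 1 ≤ B lam rbN k (i0x+1) := hjBk
            _ ≤ B lam rbN k (i0+2) := nf.B_anti k (by omega) (by omega)
            _ ≤ B lam rbN (k+1) (i0+2) := B_mono lam rbN (by omega) _
        unfold FA
        simp only [Nat.add_sub_cancel]
        rw [clip_full (by omega), clip_full (by omega)]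
        have := B_succ lam rbN k (i0+1)
        omega
      rw [Finset.sum_congr rfl eA]
      have eB : (∑ i0 ∈ Finset.Ico i0x nu.len, FA lam rbN reN (k+1) i0 (j0+1))
          = rbN (k+1) (i0x+1)
            + (B lam rbN (k+1) (i0x+2) + reN (k+1) (i0x+1) - (j0+1)) := by
        rw [Finset.sum_eq_sum_Ico_succ_bot (by omega : i0x < nu.len)]
        have eC : (∑ i0 ∈ Finset.Ico (i0x+1) nu.len, FA lam rbN reN (k+1) i0 (j0+1)) = 0 := by
          refine Finset.sum_eq_zero fun i0 hi0 => ?_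
          rw [Finset.mem_Ico] at hi0
          have hz1 : B lam rbN (k+1) (i0+1) < j0 + 1 := by
            calc B lam rbN (k+1) (i0+1) ≤ B lam rbN (k+1) (i0x+2) :=
                  nf.B_anti (k+1) (by omega) (by omega)
              _ < j0 + 1 := hq1
          have hz2 : B lam rbN (k+1) (i0+2) + reN (k+1) (i0+1) < j0 + 1 := by
            have hst : B lam rbN (k+1) (i0+2) + reN (k+1) (i0+1) ≤ B lam rbN k (i0+1) :=
              nf.diag (m := k+1) (i := i0+1) (by omega) (by omega)
            have hst2 : B lam rbN k (i0+1) ≤ B lam rbN k (i0x+2) :=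
              nf.B_anti k (by omega) (by omega)
            have hst3 : B lam rbN k (i0x+2) ≤ B lam rbN (k+1) (i0x+2) :=
              B_mono lam rbN (by omega) _
            omega
          unfold FA
          rw [clip_zero (by omega), clip_zero (by omega)]
          omega
        rw [eC]
        have hsucc := B_succ lam rbN k (i0x+1)
        unfold FA clip
        simp only [Nat.add_sub_cancel]
        omega
      rw [eB]
      omega
    -- count of k
    have ck : (T.wc.take t).count k ≥ ∑ i0 ∈ Finset.Ico 0 (i0x+1), FA lam rbN reN k i0 j0 := by
      rw [hcount k hk]
      have hsplit : (∑ i0 ∈ Finset.Ico i0x nu.len, FA lam rbN reN k i0 (j0+1))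
          = FA lam rbN reN k i0x (j0+1)
            + ∑ i0 ∈ Finset.Ico (i0x+1) nu.len, FA lam rbN reN k i0 (j0+1) :=
        Finset.sum_eq_sum_Ico_succ_bot (by omega : i0x < nu.len) _
      have htop : (∑ i0 ∈ Finset.Ico 0 (i0x+1), FA lam rbN reN k i0 j0)
          = (∑ i0 ∈ Finset.Ico 0 i0x, FA lam rbN reN k i0 j0) + FA lam rbN reN k i0x j0 :=
        Finset.sum_Ico_succ_top (by omega) _
      have hfa := FA_split lam rbN reN k i0x j0
      omega
    -- lower bound on the k-contents of the rows above, rows 1..i0x+1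
    have e3 : (∑ i0 ∈ Finset.Ico 0 (i0x+1), (rbN k (i0+1) + reN k (i0+1)))
        ≤ (∑ i0 ∈ Finset.Ico 0 (i0x+1), FA lam rbN reN k i0 j0)
          + (j0 - B lam rbN k (i0x+2)) := by
      have hbound : ∀ i0 ∈ Finset.Ico 0 (i0x+1), (rbN k (i0+1) + reN k (i0+1))
          ≤ FA lam rbN reN k i0 j0
            + (if i0 = i0x then (j0 - B lam rbN k (i0x+2)) else 0) := by
        intro i0 hi0
        rw [Finset.mem_Ico] at hi0
        by_cases hsp : i0 = i0x
        · subst hsp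
          rw [if_pos rfl]
          have hd1 : B lam rbN k (i0+2) + reN k (i0+1) ≤ B lam rbN (k-1) (i0+1) :=
            nf.diag (m := k) (i := i0+1) hk (by omega)
          have hd2 : B lam rbN (k-1) (i0+1) ≤ B lam rbN k (i0+1) :=
            B_mono lam rbN (by omega) _
          have hd4 : B lam rbN k (i0+2) ≤ j0 := by
            have : B lam rbN k (i0+2) ≤ B lam rbN (k+1) (i0+2) := B_mono lam rbN (by omega) _
            omega
          have hd5 : j0 ≤ B lam rbN k (i0+1) := by omega
          have hineq := clip_ineq (Bb := B lam rbN k (i0+1)) (p := B lam rbN (k-1) (i0+1))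
            (q := B lam rbN k (i0+2)) (r := reN k (i0+1)) (x := j0)
            (by omega) hd2 hd1 hd4 hd5
          have hrbe : B lam rbN k (i0+1) - B lam rbN (k-1) (i0+1) = rbN k (i0+1) :=
            nf.rbN_eq_sub hk (i0+1)
          unfold FA
          omega
        · rw [if_neg hsp]
          have hi0lt : i0 + 1 ≤ i0x := by omega
          have hle1 : j0 ≤ B lam rbN (k-1) (i0+1) := by
            have hz1 : B lam rbN k (i0x+1) ≤ B lam rbN (k-1) i0x := by
              have := nf.diag (m := k) (i := i0x) hk (by omega)
              exact le_trans (Nat.le_add_right _ _) this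
            have hz2 : B lam rbN (k-1) i0x ≤ B lam rbN (k-1) (i0+1) :=
              nf.B_anti (k-1) (by omega) (by omega)
            omega
          have hle2 : j0 ≤ B lam rbN k (i0+2) := by
            have : B lam rbN k (i0x+1) ≤ B lam rbN k (i0+2) :=
              nf.B_anti k (by omega) (by omega)
            omega
          unfold FA
          rw [clip_full (by omega), clip_full (by omega)]
          have := nf.rbN_eq_sub hk (i0+1)
          have hmono : B lam rbN (k-1) (i0+1) ≤ B lam rbN k (i0+1) :=
            B_mono lam rbN (by omega) (i0+1)
          omega
      calc (∑ i0 ∈ Finset.Ico 0 (i0x+1), (rbN k (i0+1) + reN k (i0+1)))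
          ≤ ∑ i0 ∈ Finset.Ico 0 (i0x+1), (FA lam rbN reN k i0 j0
            + (if i0 = i0x then (j0 - B lam rbN k (i0x+2)) else 0)) :=
            Finset.sum_le_sum hbound
        _ = (∑ i0 ∈ Finset.Ico 0 (i0x+1), FA lam rbN reN k i0 j0)
            + ∑ i0 ∈ Finset.Ico 0 (i0x+1),
              (if i0 = i0x then (j0 - B lam rbN k (i0x+2)) else 0) :=
            Finset.sum_add_distrib
        _ ≤ (∑ i0 ∈ Finset.Ico 0 (i0x+1), FA lam rbN reN k i0 j0)
            + (j0 - B lam rbN k (i0x+2)) := by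
            rw [Finset.sum_ite_eq' (Finset.Ico 0 (i0x+1)) i0x
              (fun _ => j0 - B lam rbN k (i0x+2))]
            split_ifs <;> omega
    -- extended lattice condition at row i0x+2
    have hFext := nf.latt_ext (k := k) (i := i0x+2) hk (by omega) (by omega) (by omega)
    -- index shifts
    have shk : (∑ i0 ∈ Finset.Ico 0 (i0x+1), (rbN k (i0+1) + reN k (i0+1)))
        = ∑ i' ∈ Finset.Ico 1 (i0x+2), (rbN k i' + reN k i') :=
      sum_shift_one (fun i' => rbN k i' + reN k i') (i0x+1)
    have shk1 : (∑ i0 ∈ Finset.Ico 0 i0x, (rbN (k+1) (i0+1) + reN (k+1) (i0+1)))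
        = ∑ i' ∈ Finset.Ico 1 (i0x+1), (rbN (k+1) i' + reN (k+1) i') :=
      sum_shift_one (fun i' => rbN (k+1) i' + reN (k+1) i') i0x
    have hout : (∑ i' ∈ Finset.Ico 1 (i0x+2), (rbN (k+1) i' + reN (k+1) i'))
        = (∑ i' ∈ Finset.Ico 1 (i0x+1), (rbN (k+1) i' + reN (k+1) i'))
          + (rbN (k+1) (i0x+1) + reN (k+1) (i0x+1)) :=
      Finset.sum_Ico_succ_top (by omega) _
    have hQ := B_succ lam rbN k (i0x+2)
    omega

end Lattice

end ARY
namespace ARY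

open Finset

section Stats

variable {lam mu nu : NPartition} {rbN reN : ℕ → ℕ → ℕ}

lemma NatFacts.rbox_eq (nf : NatFacts lam mu nu rbN reN) {k : ℕ} (hk : 1 ≤ k) (i : ℕ) :
    (tab nf).rbox k i = rbN k i := by
  show Set.ncard {j | IsBox lam nu i j ∧ boxF lam nu rbN i j = k} = rbN k i
  rw [nf.boxSet_eq hk i, Set.ncard_coe_finset, Nat.card_Ioc]
  exact nf.rbN_eq_sub hk i

lemma NatFacts.redge_eq (nf : NatFacts lam mu nu rbN reN) {k : ℕ} (hk : 1 ≤ k) (i : ℕ) :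
    (tab nf).redge k i = reN k i := by
  show Set.ncard {j | k ∈ edgeF lam mu rbN reN i j} = reN k i
  rw [nf.edgeSet_eq hk i, Set.ncard_coe_finset, Nat.card_Ioc]
  omega

/-- The main construction, in natural-number form. -/
theorem main_nat (nf : NatFacts lam mu nu rbN reN) :
    ∃ T : EdgeTableau lam mu nu, T ∈ EdgeTab lam mu nu ∧
      ∀ k i, 1 ≤ k → k ≤ mu.len → 1 ≤ i → i ≤ nu.len →
        T.rbox k i = rbN k i ∧ T.redge k i = reN k i :=
  ⟨tab nf, lattice_wc nf, fun k i hk _ _ _ => ⟨nf.rbox_eq hk i, nf.redge_eq hk i⟩⟩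

end Stats

end ARY
/-- If the integers `(r_k^i, r_k^{i+1/2})` satisfy conditions (A)–(F) for
`(λ,μ,ν)`, then there is a tableau `T ∈ EdgeTab(λ,μ,ν)` with exactly these
statistics. -/
theorem exists_tableau_of_integer_point (lam mu nu : NPartition)
    (rb re : ℕ → ℕ → ℤ)
    (h : SatisfiesAF lam mu nu (fun k i => (rb k i : ℝ)) (fun k i => (re k i : ℝ))) :
    ∃ T : EdgeTableau lam mu nu, T ∈ EdgeTab lam mu nu ∧
      ∀ k i, 1 ≤ k → k ≤ mu.len → 1 ≤ i → i ≤ nu.len →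
        (T.rbox k i : ℤ) = rb k i ∧ (T.redge k i : ℤ) = re k i := by
  classical
  obtain ⟨hsupp, hA, hB, hC, hD, hE, hF⟩ := h
  -- nonnegativity
  have hrb0 : ∀ k i, 0 ≤ rb k i := by
    intro k i
    have h0 : (0:ℝ) ≤ ((rb k i : ℤ) : ℝ) := (hA k i).1
    exact_mod_cast h0
  have hre0 : ∀ k i, 0 ≤ re k i := by
    intro k i
    have h0 : (0:ℝ) ≤ ((re k i : ℤ) : ℝ) := (hA k i).2
    exact_mod_cast h0
  -- natural-number data
  set rbN : ℕ → ℕ → ℕ := fun k i => (rb k i).toNat with hrbN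
  set reN : ℕ → ℕ → ℕ := fun k i => (re k i).toNat with hreN
  have hcastb : ∀ k i, ((rbN k i : ℕ) : ℝ) = ((rb k i : ℤ) : ℝ) := by
    intro k i
    rw [hrbN, ← Int.cast_natCast, Int.toNat_of_nonneg (hrb0 k i)]
  have hcaste : ∀ k i, ((reN k i : ℕ) : ℝ) = ((re k i : ℤ) : ℝ) := by
    intro k i
    rw [hreN, ← Int.cast_natCast, Int.toNat_of_nonneg (hre0 k i)]
  have nf : ARY.NatFacts lam mu nu rbN reN := by
    constructor
    · -- supp
      intro k i hn
      obtain ⟨h1, h2⟩ := hsupp k i hn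
      constructor
      · have h1' : ((rb k i : ℤ) : ℝ) = 0 := h1
        have : rb k i = 0 := by exact_mod_cast h1'
        simp [hrbN, this]
      · have h2' : ((re k i : ℤ) : ℝ) = 0 := h2
        have : re k i = 0 := by exact_mod_cast h2'
        simp [hreN, this]
    · -- shape
      intro i hi
      have h0 := hB i hi
      have h1 : ((lam.part i : ℝ)) + ∑ k ∈ Finset.Icc 1 mu.len, ((rbN k i : ℕ) : ℝ)
          = (nu.part i : ℝ) := by
        rw [Finset.sum_congr rfl (fun k _ => hcastb k i)]
        exact h0
      exact_mod_cast h1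
    · -- content
      intro k hk
      have h0 := hC k hk
      have h1 : ∑ i ∈ Finset.Icc 1 nu.len, (((rbN k i + reN k i : ℕ)) : ℝ)
          = (mu.part k : ℝ) := by
        rw [Finset.sum_congr rfl
          (fun i _ => by push_cast; rw [hcastb k i, hcaste k i] :
            ∀ i ∈ Finset.Icc 1 nu.len, (((rbN k i + reN k i : ℕ)) : ℝ)
              = ((rb k i : ℝ) + (re k i : ℝ)))]
        exact h0
      exact_mod_cast h1
    · -- gap
      intro k i hk hkm hi hiL
      have h0 := hD k i hk hkm hi hiL
      have hIco : Finset.Ico 1 k = Finset.Icc 1 (k-1) := by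
        rw [← Finset.Ico_add_one_right_eq_Icc]
        congr 1
        omega
      rw [hIco] at h0
      have h1 : ((lam.part (i+1) : ℝ) + ∑ k' ∈ Finset.Icc 1 k, ((rbN k' (i+1) : ℕ) : ℝ))
            + ((reN k i : ℕ) : ℝ)
          ≤ (lam.part i : ℝ) + ∑ k' ∈ Finset.Icc 1 (k-1), ((rbN k' i : ℕ) : ℝ) := by
        rw [Finset.sum_congr rfl (fun k' _ => hcastb k' (i+1)),
          Finset.sum_congr rfl (fun k' _ => hcastb k' i), hcaste k i]
        have hle := h0
        linarith [hle]
      exact_mod_cast h1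
    · -- high
      intro k i hik
      obtain ⟨h1, h2⟩ := hE k i hik
      constructor
      · have h1' : ((rb k i : ℤ) : ℝ) = 0 := h1
        have : rb k i = 0 := by exact_mod_cast h1'
        simp [hrbN, this]
      · have h2' : ((re k i : ℤ) : ℝ) = 0 := h2
        have : re k i = 0 := by exact_mod_cast h2'
        simp [hreN, this]
    · -- latt
      intro k i hk hkm hi hiL
      have h0 := hF k i hk hkm hi hiL
      have h1 : ((rbN (k+1) i : ℕ) : ℝ)
            + ∑ i' ∈ Finset.Ico 1 i, (((rbN (k+1) i' + reN (k+1) i' : ℕ)) : ℝ)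
          ≤ ∑ i' ∈ Finset.Ico 1 i, (((rbN k i' + reN k i' : ℕ)) : ℝ) := by
        rw [Finset.sum_congr rfl
          (fun i' _ => by push_cast; rw [hcastb (k+1) i', hcaste (k+1) i'] :
            ∀ i' ∈ Finset.Ico 1 i, (((rbN (k+1) i' + reN (k+1) i' : ℕ)) : ℝ)
              = ((rb (k+1) i' : ℝ) + (re (k+1) i' : ℝ))),
          Finset.sum_congr rfl
          (fun i' _ => by push_cast; rw [hcastb k i', hcaste k i'] :
            ∀ i' ∈ Finset.Ico 1 i, (((rbN k i' + reN k i' : ℕ)) : ℝ)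
              = ((rb k i' : ℝ) + (re k i' : ℝ))),
          hcastb (k+1) i]
        exact h0
      exact_mod_cast h1
  obtain ⟨T, hT1, hT2⟩ := ARY.main_nat nf
  refine ⟨T, hT1, fun k i hk hkm hi hiL => ?_⟩
  obtain ⟨e1, e2⟩ := hT2 k i hk hkm hi hiL
  constructor
  · rw [e1, hrbN]
    exact Int.toNat_of_nonneg (hrb0 k i)
  · rw [e2, hreN]
    exact Int.toNat_of_nonneg (hre0 k i)
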